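/- arXiv:0708.3122 — 2 statements merged into one kernel-verified Lean document; each statement's English description precedes it below -/
import Mathlib

section
/- Let β₀ ≥ 0 and Σ₀ a multiset of nonnegative reals containing 0 with multiplicity β₀, and set f(t) = Σ_{β∈Σ₀} e^(t(1−β)) (assumed convergent). Then L'₀(z) := L'(f)(z−1) extends meromorphically to ℂ with only simple poles of integer residue, satisfies L'₀(1+z) = −L'₀(1−z), and Res_{z=0} L'₀ = Res_{z=2} L'₀ = β₀. -/
open Real Set MeasureTheory Filter Topology

/-!
Expanding `f` termwise, dominated convergence gives, for real `z ≥ Z`,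
`L'(f)(z - 1) = ∑ᵢ 2w / (w² + μᵢ)` with `w = z - 1` and `μᵢ = bᵢ - 1`: the sum of the explicit
transforms of the exponentials. Integrability at `Z` forces `(Z - 1)² + μᵢ > 0` and makes
`∑ᵢ 1 / ((Z - 1)² + μᵢ)` converge, so on every disc all but finitely many terms are uniformly
dominated by this series; this gives the meromorphic continuation. Each term is odd in `w` and
has simple poles at `w = ±√(-μᵢ)` of residue `1` (a single pole of residue `2` at `w = 0` when
`μᵢ = 0`); the poles at `z = 0` and `z = 2` come exactly from the `bᵢ = 0` terms.
-/

theorem pos_of_integrableOn_exp_neg_mul_Ioi {a : ℝ}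
    (h : IntegrableOn (fun t => rexp (-a * t)) (Ioi 0)) : 0 < a := by
  by_contra! ha
  have hone : IntegrableOn (fun _ : ℝ => (1 : ℝ)) (Ioi 0) := by
    refine h.mono' aestronglyMeasurable_const ?_
    filter_upwards [ae_restrict_mem measurableSet_Ioi] with t ht
    simpa using Real.one_le_exp (mul_nonneg (neg_nonneg.2 ha) ht.le)
  simp [integrableOn_const_iff] at hone

theorem hasSum_inv_of_hasSum_exp_neg_mul {ι : Type*} [Countable ι] {a : ι → ℝ} {g : ℝ → ℝ}
    (hg : ∀ t > 0, HasSum (fun i => rexp (-a i * t)) (g t)) (hint : IntegrableOn g (Ioi 0)) :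
    (∀ i, 0 < a i) ∧ HasSum (fun i => (a i)⁻¹) (∫ t in Ioi 0, g t) := by
  have hg_ae : ∀ᵐ t ∂volume.restrict (Ioi 0), HasSum (fun i => rexp (-a i * t)) (g t) :=
    ae_restrict_of_forall_mem measurableSet_Ioi hg
  have hpos : ∀ i, 0 < a i := fun i => pos_of_integrableOn_exp_neg_mul_Ioi <| by
    refine hint.mono' (by fun_prop) (hg_ae.mono fun t ht => ?_)
    rw [norm_of_nonneg (exp_pos _).le]
    exact le_hasSum ht i fun j _ => (exp_pos _).le
  refine ⟨hpos, ?_⟩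
  have hnorm : ∀ i t, ‖rexp (-a i * t)‖ ≤ rexp (-a i * t) := fun i t =>
    (norm_of_nonneg (exp_pos _).le).le
  have hintegral : ∀ i, ∫ t in Ioi 0, rexp (-a i * t) = (a i)⁻¹ := fun i => by
    rw [integral_exp_mul_Ioi (neg_lt_zero.2 (hpos i)) 0]
    simp
  simpa only [hintegral] using hasSum_integral_of_dominated_convergence _ (fun i => by fun_prop)
    (fun i => ae_of_all _ (hnorm i)) (hg_ae.mono fun t ht => ht.summable)
    (hint.congr (hg_ae.mono fun t ht => ht.tsum_eq.symm)) hg_ae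

theorem hasSum_inv_of_integrableOn_exp_neg_mul_tsum {ι : Type*} [Countable ι] {b : ι → ℝ}
    {f : ℝ → ℝ} (hf : ∀ t : ℝ, 0 < t →
      Summable (fun i => rexp (t * (1 - b i))) ∧ f t = ∑' i, rexp (t * (1 - b i)))
    {x : ℝ} (hint : IntegrableOn (fun t => rexp (-t * x ^ 2) * f t) (Ioi 0)) :
    (∀ i, 0 < x ^ 2 + (b i - 1)) ∧
      HasSum (fun i => (x ^ 2 + (b i - 1))⁻¹) (∫ t in Ioi 0, rexp (-t * x ^ 2) * f t) := by
  refine hasSum_inv_of_hasSum_exp_neg_mul (fun t ht => ?_) hint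
  obtain ⟨hsummable, hft⟩ := hf t ht
  have hterm : ∀ i, rexp (-t * x ^ 2) * rexp (t * (1 - b i))
      = rexp (-(x ^ 2 + (b i - 1)) * t) := fun i => by
    rw [← Real.exp_add]
    ring_nf
  have h := hsummable.hasSum.mul_left (rexp (-t * x ^ 2))
  rw [← hft] at h
  simp only [hterm] at h
  exact h

theorem tendsto_sub_mul_comp_sub_const {g : ℂ → ℂ} {z₀ a : ℂ} {l : Filter ℂ}
    (h : Tendsto (fun w => (w - (z₀ - a)) * g w) (𝓝[≠] (z₀ - a)) l) :
    Tendsto (fun z => (z - z₀) * g (z - a)) (𝓝[≠] z₀) l := by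
  have hshift : Tendsto (fun z => z - a) (𝓝[≠] z₀) (𝓝[≠] (z₀ - a)) := by
    refine tendsto_nhdsWithin_iff.2 ⟨?_, ?_⟩
    · exact ((continuous_id.sub continuous_const).tendsto z₀).mono_left nhdsWithin_le_nhds
    · filter_upwards [self_mem_nhdsWithin] with z (hz : z ≠ z₀)
      simpa using hz
  refine (h.comp hshift).congr fun z => ?_
  simp only [Function.comp_apply, sub_sub_sub_cancel_right]

section OddPartialFraction

variable {ι : Type*} {μ : ι → ℝ}

noncomputable def oddPartialFractionSum (μ : ι → ℝ) (w : ℂ) : ℂ :=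
  ∑' i, 2 * w / (w ^ 2 + μ i)

theorem oddPartialFractionSum_neg (w : ℂ) :
    oddPartialFractionSum μ (-w) = -oddPartialFractionSum μ w := by
  simp only [oddPartialFractionSum, ← tsum_neg, neg_sq, mul_neg, neg_div]

theorem oddPartialFractionSum_ofReal {x s : ℝ} (h : HasSum (fun i => (x ^ 2 + μ i)⁻¹) s) :
    oddPartialFractionSum μ x = 2 * x * s := by
  have hC : HasSum (fun i => 2 * (x : ℂ) * ((x ^ 2 + μ i : ℝ) : ℂ)⁻¹) (2 * x * s) := by
    simpa using (Complex.ofRealCLM.hasSum h).mul_left (2 * (x : ℂ))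
  rw [oddPartialFractionSum, ← hC.tsum_eq]
  push_cast
  simp only [div_eq_mul_inv]

theorem tendsto_sub_mul_two_mul_div_sq_add (w₀ c : ℂ) :
    Tendsto (fun w => (w - w₀) * (2 * w / (w ^ 2 + c))) (𝓝[≠] w₀)
      (𝓝 (if w₀ ^ 2 + c = 0 then if w₀ = 0 then 2 else 1 else 0)) := by
  split_ifs with hroot hw₀
  · subst hw₀
    obtain rfl : c = 0 := by simpa using hroot
    refine tendsto_const_nhds.congr' ?_
    filter_upwards [self_mem_nhdsWithin] with w (hw : w ≠ 0)
    field_simp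
    ring
  · have hfac : ∀ w, w ^ 2 + c = (w - w₀) * (w + w₀) := fun w => by linear_combination hroot
    have hlim : Tendsto (fun w => 2 * w / (w + w₀)) (𝓝 w₀) (𝓝 1) := by
      have hcont : ContinuousAt (fun w => 2 * w / (w + w₀)) w₀ :=
        ContinuousAt.div (by fun_prop) (by fun_prop) (by simpa [← two_mul] using hw₀)
      simpa [← two_mul, hw₀] using hcont.tendsto
    refine (hlim.mono_left nhdsWithin_le_nhds).congr' ?_
    filter_upwards [self_mem_nhdsWithin] with w hw
    rw [hfac, ← mul_div_assoc, mul_div_mul_left _ _ (sub_ne_zero.2 hw)]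
  · have hcont : ContinuousAt (fun w => (w - w₀) * (2 * w / (w ^ 2 + c))) w₀ :=
      (continuousAt_id.sub continuousAt_const).mul
        (ContinuousAt.div (by fun_prop) (by fun_prop) hroot)
    simpa using hcont.tendsto.mono_left nhdsWithin_le_nhds

theorem half_add_le_norm_sq_add {w : ℂ} {K A m : ℝ} (hw : ‖w‖ ≤ K) (hm : 2 * K ^ 2 + A ≤ m) :
    (A + m) / 2 ≤ ‖w ^ 2 + m‖ := by
  have hsq : ‖w ^ 2‖ ≤ K ^ 2 := by
    rw [norm_pow]; exact pow_le_pow_left₀ (norm_nonneg w) hw 2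
  have hm' : m ≤ ‖(m : ℂ)‖ := by
    rw [Complex.norm_real]; exact le_abs_self m
  have := norm_sub_norm_le (m : ℂ) (-w ^ 2)
  rw [sub_neg_eq_add, add_comm, norm_neg] at this
  linarith

theorem norm_two_mul_div_sq_add_le {w : ℂ} {K A m : ℝ} (hw : ‖w‖ ≤ K) (hm : 2 * K ^ 2 + A ≤ m)
    (hAm : 0 < A + m) : ‖2 * w / (w ^ 2 + m)‖ ≤ 4 * K * (A + m)⁻¹ := by
  have hden := half_add_le_norm_sq_add hw hm
  rw [norm_div, norm_mul, Complex.norm_two, div_le_iff₀ (by linarith)]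
  calc 2 * ‖w‖ ≤ 4 * K * (A + m)⁻¹ * ((A + m) / 2) := by field_simp; linarith
    _ ≤ 4 * K * (A + m)⁻¹ * ‖w ^ 2 + m‖ :=
        mul_le_mul_of_nonneg_left hden
          (mul_nonneg (by linarith [(norm_nonneg w).trans hw]) (inv_nonneg.2 hAm.le))

theorem finite_setOf_le_of_summable_inv {A : ℝ} (hpos : ∀ i, 0 < A + μ i)
    (hsum : Summable fun i => (A + μ i)⁻¹) (C : ℝ) : {i | μ i ≤ C}.Finite := by
  have hsmall := hsum.tendsto_cofinite_zero.eventually_lt_const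
    (inv_pos.2 (lt_max_of_lt_right one_pos : 0 < max (A + C) 1))
  refine (eventually_cofinite.1 hsmall).subset fun i (hi : μ i ≤ C) => not_lt.2 ?_
  exact inv_anti₀ (hpos i) ((by linarith : A + μ i ≤ A + C).trans (le_max_left _ _))

theorem exists_finset_differentiableOn_tsum_compl {A : ℝ} (hpos : ∀ i, 0 < A + μ i)
    (hsum : Summable fun i => (A + μ i)⁻¹) (K : ℝ) :
    ∃ T : Finset ι, (∀ i ∉ T, K ^ 2 < μ i) ∧
      (∀ w ∈ Metric.ball (0 : ℂ) K, Summable fun j : {i // i ∉ T} => 2 * w / (w ^ 2 + μ j)) ∧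
      DifferentiableOn ℂ (fun w : ℂ => ∑' j : {i // i ∉ T}, 2 * w / (w ^ 2 + μ j))
        (Metric.ball 0 K) := by
  set T := (finite_setOf_le_of_summable_inv hpos hsum (2 * K ^ 2 + |A|)).toFinset
  have hfar : ∀ i ∉ T, 2 * K ^ 2 + |A| < μ i := fun i hi => by simpa [T] using hi
  refine ⟨T, ?_⟩
  have hbound : ∀ (j : {i // i ∉ T}),
      ∀ w ∈ Metric.ball (0 : ℂ) K, ‖2 * w / (w ^ 2 + μ j)‖ ≤ 4 * K * (A + μ j)⁻¹ :=
    fun j w hw => norm_two_mul_div_sq_add_le (mem_ball_zero_iff.1 hw).le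
      (by linarith [hfar j j.2, le_abs_self A]) (hpos j)
  have hu : Summable fun j : {i // i ∉ T} => 4 * K * (A + μ j)⁻¹ :=
    (hsum.subtype _).mul_left _
  refine ⟨fun i hi => by nlinarith [hfar i hi, abs_nonneg A, sq_nonneg K],
    fun w hw => hu.of_norm_bounded fun j => hbound j w hw,
    Complex.differentiableOn_tsum_of_summable_norm hu (fun j => ?_) Metric.isOpen_ball hbound⟩
  refine DifferentiableOn.div (by fun_prop) (by fun_prop) fun w hw h0 => ?_
  have := half_add_le_norm_sq_add (mem_ball_zero_iff.1 hw).le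
    (by linarith [hfar j j.2, le_abs_self A] : 2 * K ^ 2 + A ≤ μ j)
  rw [h0, norm_zero] at this
  linarith [hpos j]

theorem summable_two_mul_div_sq_add {A : ℝ} (hpos : ∀ i, 0 < A + μ i)
    (hsum : Summable fun i => (A + μ i)⁻¹) (w : ℂ) :
    Summable fun i => 2 * w / (w ^ 2 + μ i) := by
  obtain ⟨T, -, hT, -⟩ := exists_finset_differentiableOn_tsum_compl hpos hsum (‖w‖ + 1)
  exact (Finset.summable_compl_iff T).1 (hT w (by simp))

theorem meromorphic_oddPartialFractionSum {A : ℝ} (hpos : ∀ i, 0 < A + μ i)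
    (hsum : Summable fun i => (A + μ i)⁻¹) : Meromorphic (oddPartialFractionSum μ) := by
  intro w₀
  obtain ⟨T, -, -, htail⟩ := exists_finset_differentiableOn_tsum_compl hpos hsum (‖w₀‖ + 1)
  have hsplit : oddPartialFractionSum μ = fun w : ℂ =>
      ∑ i ∈ T, 2 * w / (w ^ 2 + μ i) + ∑' j : {i // i ∉ T}, 2 * w / (w ^ 2 + μ j) :=
    funext fun w => ((summable_two_mul_div_sq_add hpos hsum w).sum_add_tsum_subtype_compl T).symm
  rw [hsplit]
  refine MeromorphicAt.add ?_
    (htail.analyticAt (Metric.isOpen_ball.mem_nhds (by simp))).meromorphicAt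
  exact MeromorphicAt.fun_sum fun i _ => by fun_prop

theorem tendsto_sub_mul_oddPartialFractionSum {A : ℝ} (hpos : ∀ i, 0 < A + μ i)
    (hsum : Summable fun i => (A + μ i)⁻¹) (w₀ : ℂ) :
    Tendsto (fun w => (w - w₀) * oddPartialFractionSum μ w) (𝓝[≠] w₀)
      (𝓝 (((if w₀ = 0 then 2 else 1) * Nat.card {i // w₀ ^ 2 + μ i = 0} : ℕ) : ℂ)) := by
  classical
  obtain ⟨T, hfar, -, htail⟩ := exists_finset_differentiableOn_tsum_compl hpos hsum (‖w₀‖ + 1)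
  have hpoles : ∀ i, w₀ ^ 2 + μ i = 0 → i ∈ T := by
    intro i hi
    by_contra hiT
    have hμ : ‖(μ i : ℂ)‖ = ‖w₀‖ ^ 2 := by
      rw [← norm_pow, eq_neg_of_add_eq_zero_right hi, norm_neg]
    rw [Complex.norm_real, Real.norm_eq_abs] at hμ
    nlinarith [hfar i hiT, le_abs_self (μ i), norm_nonneg w₀]
  have hcard : Nat.card {i // w₀ ^ 2 + μ i = 0} = (T.filter fun i => w₀ ^ 2 + μ i = 0).card := by
    rw [← Nat.card_eq_finsetCard]
    exact Nat.card_congr (Equiv.subtypeEquivRight fun i => by simpa using fun h => hpoles i h)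
  have hfinite : Tendsto (fun w : ℂ => ∑ i ∈ T, (w - w₀) * (2 * w / (w ^ 2 + μ i))) (𝓝[≠] w₀)
      (𝓝 (((if w₀ = 0 then 2 else 1) * Nat.card {i // w₀ ^ 2 + μ i = 0} : ℕ) : ℂ)) := by
    convert tendsto_finsetSum T fun i _ => tendsto_sub_mul_two_mul_div_sq_add w₀ (μ i)
    rw [hcard, Finset.sum_ite, Finset.sum_const_zero, add_zero, Finset.sum_const, nsmul_eq_mul]
    push_cast
    ring
  have htail0 : Tendsto (fun w : ℂ => (w - w₀) * ∑' j : {i // i ∉ T}, 2 * w / (w ^ 2 + μ j))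
      (𝓝[≠] w₀) (𝓝 0) := by
    have hcont := (htail.differentiableAt
      (Metric.isOpen_ball.mem_nhds (mem_ball_zero_iff.2 (lt_add_one ‖w₀‖)))).continuousAt
    have hcont' : ContinuousAt
        (fun w : ℂ => (w - w₀) * ∑' j : {i // i ∉ T}, 2 * w / (w ^ 2 + μ j)) w₀ :=
      (continuous_sub_right w₀).continuousAt.mul hcont
    simpa using hcont'.tendsto.mono_left nhdsWithin_le_nhds
  have hlim := hfinite.add htail0
  rw [add_zero] at hlim
  refine hlim.congr fun w => ?_
  rw [← Finset.mul_sum, ← mul_add, oddPartialFractionSum,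
    (summable_two_mul_div_sq_add hpos hsum w).sum_add_tsum_subtype_compl T]

end OddPartialFraction

theorem laplace_deriv_heat_trace_shifted_meromorphic_general
    {ι : Type} [Countable ι] (b : ι → ℝ)
    (β₀ : ℕ) (hβ₀ : Nat.card {i // b i = 0} = β₀)
    (f : ℝ → ℝ)
    (hf : ∀ t : ℝ, 0 < t →
      Summable (fun i => Real.exp (t * (1 - b i))) ∧
      f t = ∑' i, Real.exp (t * (1 - b i)))
    (Z : ℝ)
    (hint : ∀ z : ℝ, Z ≤ z →
      IntegrableOn (fun t => Real.exp (-t * (z - 1) ^ 2) * f t) (Ioi 0)) :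
    ∃ F : ℂ → ℂ, MeromorphicOn F Set.univ ∧
      (∀ z : ℝ, Z ≤ z →
        F z = 2 * (z - 1) * ∫ t in Ioi (0 : ℝ), Real.exp (-t * (z - 1) ^ 2) * f t) ∧
      (∀ w : ℂ, ∃ n : ℤ,
        Tendsto (fun s => (s - w) * F s) (𝓝[≠] w) (𝓝 (n : ℂ))) ∧
      (∀ s : ℂ, F (1 + s) = -F (1 - s)) ∧
      Tendsto (fun s => s * F s) (𝓝[≠] (0 : ℂ)) (𝓝 (β₀ : ℂ)) ∧
      Tendsto (fun s => (s - 2) * F s) (𝓝[≠] (2 : ℂ)) (𝓝 (β₀ : ℂ)) := by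
  set μ : ι → ℝ := fun i => b i - 1
  have hlaplace : ∀ z : ℝ, Z ≤ z → (∀ i, 0 < (z - 1) ^ 2 + μ i) ∧
      HasSum (fun i => ((z - 1) ^ 2 + μ i)⁻¹) (∫ t in Ioi 0, rexp (-t * (z - 1) ^ 2) * f t) :=
    fun z hz => hasSum_inv_of_integrableOn_exp_neg_mul_tsum hf (hint z hz)
  obtain ⟨hpos, hsum⟩ := hlaplace Z le_rfl
  have hres : ∀ z₀ : ℂ, Tendsto (fun z => (z - z₀) * oddPartialFractionSum μ (z - 1)) (𝓝[≠] z₀)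
      (𝓝 (((if z₀ - 1 = 0 then 2 else 1) * Nat.card {i // (z₀ - 1) ^ 2 + μ i = 0} : ℕ) : ℂ)) :=
    fun z₀ => tendsto_sub_mul_comp_sub_const
      (tendsto_sub_mul_oddPartialFractionSum hpos hsum.summable (z₀ - 1))
  have hβ : ∀ z₀ : ℂ, (z₀ - 1) ^ 2 = 1 → Nat.card {i // (z₀ - 1) ^ 2 + μ i = 0} = β₀ := by
    intro z₀ hz₀
    rw [← hβ₀]
    exact Nat.card_congr (Equiv.subtypeEquivRight fun i => by simp [μ, hz₀])
  refine ⟨fun z => oddPartialFractionSum μ (z - 1),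
    fun z _ => (meromorphic_oddPartialFractionSum hpos hsum.summable (z - 1)).comp_analyticAt
      (g := fun z => z - 1) (by fun_prop),
    fun z hz => ?_, fun w => ⟨_, by rw [Int.cast_natCast]; exact hres w⟩,
    fun s => by simp [oddPartialFractionSum_neg], ?_, ?_⟩
  · change oddPartialFractionSum μ ((z : ℂ) - 1) = _
    rw [show (z : ℂ) - 1 = ((z - 1 : ℝ) : ℂ) by push_cast; ring,
      oddPartialFractionSum_ofReal (hlaplace z hz).2]
  · have h := hres 0
    rw [hβ 0 (by norm_num)] at h
    simpa using h
  · have h := hres 2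
    rw [hβ 2 (by norm_num)] at h
    norm_num at h
    exact h

/-- Let `β₀ ≥ 0` and `Σ₀` a multiset of nonnegative reals (encoded by a countable family
`b : ι → ℝ`) containing `0` with multiplicity `β₀`, and `f(t) = Σ_{β∈Σ₀} e^(t(1−β))`
(assumed convergent, with `L'(f)(z−1)` convergent for real `z ≥ Z`).  Then
`L'₀(z) = L'(f)(z−1)` extends to a meromorphic function `F` on `ℂ` with only simple
poles of integer residue, satisfying `F(1+z) = −F(1−z)`, and
`Res_{z=0} F = Res_{z=2} F = β₀`. -/
theorem laplace_deriv_heat_trace_shifted_meromorphic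
    {ι : Type} [Countable ι] (b : ι → ℝ) (hb : ∀ i, 0 ≤ b i)
    (β₀ : ℕ) (hβ₀ : Nat.card {i // b i = 0} = β₀)
    (f : ℝ → ℝ)
    (hf : ∀ t : ℝ, 0 < t →
      Summable (fun i => Real.exp (t * (1 - b i))) ∧
      f t = ∑' i, Real.exp (t * (1 - b i)))
    (Z : ℝ)
    (hint : ∀ z : ℝ, Z ≤ z →
      IntegrableOn (fun t => Real.exp (-t * (z - 1) ^ 2) * f t) (Ioi 0)) :
    ∃ F : ℂ → ℂ, MeromorphicOn F Set.univ ∧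
      (∀ z : ℝ, Z ≤ z →
        F z = 2 * (z - 1) * ∫ t in Ioi (0 : ℝ), Real.exp (-t * (z - 1) ^ 2) * f t) ∧
      (∀ w : ℂ, ∃ n : ℤ,
        Tendsto (fun s => (s - w) * F s) (𝓝[≠] w) (𝓝 (n : ℂ))) ∧
      (∀ s : ℂ, F (1 + s) = -F (1 - s)) ∧
      Tendsto (fun s => s * F s) (𝓝[≠] (0 : ℂ)) (𝓝 (β₀ : ℂ)) ∧
      Tendsto (fun s => (s - 2) * F s) (𝓝[≠] (2 : ℂ)) (𝓝 (β₀ : ℂ)) :=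
  laplace_deriv_heat_trace_shifted_meromorphic_general b β₀ hβ₀ f hf Z hint
end

section
/- For positive reals z and α, 2z ∫₀^∞ dt e^(−t z²) ∫ℝ e^(−tλ²)/(α + iλ) dλ = 2π/(z + α), and the same with (α − iλ) in the denominator. -/
/-!
The Gaussian weight is even, so `λ ↦ -λ` shows that the inner integrals with `α + iλ` and
`α - iλ` agree, and averaging them replaces `1/(α + iλ)` by its real part `α/(λ² + α²)`.
The integrand is then absolutely integrable on `(0, ∞) × ℝ`, and Fubini together with
`∫₀^∞ e^(-t(λ² + z²)) dt = 1/(λ² + z²)` reduces everything to the elementary integral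
`∫ℝ dλ / ((λ² + α²)(λ² + z²)) = π / (α z (α + z))`, obtained by partial fractions, or from an
explicit antiderivative when `α = z`.
-/

open Real Set MeasureTheory Filter Topology
open scoped Complex
open Complex (I)

section RealIntegrals

variable {a b c : ℝ}

lemma inv_sq_add_sq_eq_mul_inv_one_add_sq (hc : c ≠ 0) (x : ℝ) :
    (x ^ 2 + c ^ 2)⁻¹ = c⁻¹ ^ 2 * (1 + (c⁻¹ * x) ^ 2)⁻¹ := by
  field_simp
  ring

lemma integrable_inv_sq_add_sq (hc : c ≠ 0) : Integrable fun x : ℝ ↦ (x ^ 2 + c ^ 2)⁻¹ := by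
  simp_rw [inv_sq_add_sq_eq_mul_inv_one_add_sq hc]
  exact (integrable_inv_one_add_sq.comp_mul_left' (inv_ne_zero hc)).const_mul _

lemma integral_univ_inv_sq_add_sq (hc : 0 < c) : ∫ x : ℝ, (x ^ 2 + c ^ 2)⁻¹ = π / c := by
  simp_rw [inv_sq_add_sq_eq_mul_inv_one_add_sq hc.ne']
  rw [integral_const_mul, Measure.integral_comp_mul_left (fun y ↦ (1 + y ^ 2)⁻¹),
    integral_univ_inv_one_add_sq, inv_inv, abs_of_pos hc, smul_eq_mul]
  field_simp

lemma integrable_inv_sq_add_sq_mul_sq_add_sq (ha : a ≠ 0) (hb : b ≠ 0) :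
    Integrable fun x : ℝ ↦ ((x ^ 2 + a ^ 2) * (x ^ 2 + b ^ 2))⁻¹ := by
  refine ((integrable_inv_sq_add_sq ha).const_mul (b ^ 2)⁻¹).mono' (by fun_prop)
    (ae_of_all _ fun x ↦ ?_)
  rw [norm_of_nonneg (by positivity), mul_inv, mul_comm]
  gcongr
  exact le_add_of_nonneg_left (sq_nonneg x)

lemma tendsto_div_sq_add_sq_cocompact (c : ℝ) :
    Tendsto (fun x : ℝ ↦ x / (x ^ 2 + c ^ 2)) (cocompact ℝ) (𝓝 0) := by
  refine squeeze_zero_norm' ?_ (tendsto_inv_atTop_zero.comp tendsto_norm_cocompact_atTop)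
  filter_upwards [(tendsto_norm_cocompact_atTop (E := ℝ)).eventually_gt_atTop 0] with x hx
  rw [Real.norm_eq_abs] at hx
  calc ‖x / (x ^ 2 + c ^ 2)‖ = |x| / (|x| ^ 2 + c ^ 2) := by
        rw [norm_div, sq_abs, Real.norm_eq_abs, Real.norm_eq_abs,
          abs_of_nonneg (by positivity : (0 : ℝ) ≤ x ^ 2 + c ^ 2)]
    _ ≤ |x| / |x| ^ 2 := by gcongr; exact le_add_of_nonneg_right (sq_nonneg c)
    _ = ‖x‖⁻¹ := by rw [Real.norm_eq_abs]; field_simp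

lemma hasDerivAt_antideriv_inv_sq_add_sq_sq (hc : c ≠ 0) (x : ℝ) :
    HasDerivAt (fun x ↦ (2 * c ^ 2)⁻¹ * (x / (x ^ 2 + c ^ 2)) + (2 * c ^ 3)⁻¹ * arctan (x / c))
      ((x ^ 2 + c ^ 2) ^ 2)⁻¹ x := by
  have hpos : 0 < x ^ 2 + c ^ 2 := by positivity
  have hquot : HasDerivAt (fun x ↦ x / (x ^ 2 + c ^ 2))
      ((1 * (x ^ 2 + c ^ 2) - x * (2 * x)) / (x ^ 2 + c ^ 2) ^ 2) x :=
    (hasDerivAt_id x).div (by simpa using (hasDerivAt_pow 2 x).add_const (c ^ 2)) hpos.ne'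
  have harctan : HasDerivAt (fun x ↦ arctan (x / c)) (1 / (1 + (x / c) ^ 2) * (1 / c)) x :=
    ((hasDerivAt_id x).div_const c).arctan
  refine ((hquot.const_mul (2 * c ^ 2)⁻¹).add (harctan.const_mul (2 * c ^ 3)⁻¹)).congr_deriv ?_
  field_simp
  ring

lemma integral_univ_inv_sq_add_sq_sq (hc : 0 < c) :
    ∫ x : ℝ, ((x ^ 2 + c ^ 2) ^ 2)⁻¹ = π / (2 * c ^ 3) := by
  have hlim {l : Filter ℝ} (hl : l ≤ cocompact ℝ) {θ : ℝ}
      (harctan : Tendsto (fun x ↦ arctan (x / c)) l (𝓝 θ)) :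
      Tendsto (fun x ↦ (2 * c ^ 2)⁻¹ * (x / (x ^ 2 + c ^ 2)) + (2 * c ^ 3)⁻¹ * arctan (x / c)) l
        (𝓝 ((2 * c ^ 2)⁻¹ * 0 + (2 * c ^ 3)⁻¹ * θ)) :=
    (((tendsto_div_sq_add_sq_cocompact c).mono_left hl).const_mul _).add (harctan.const_mul _)
  rw [integral_of_hasDerivAt_of_tendsto (hasDerivAt_antideriv_inv_sq_add_sq_sq hc.ne')
    (by simpa only [sq] using integrable_inv_sq_add_sq_mul_sq_add_sq hc.ne' hc.ne')
    (hlim atBot_le_cocompact ((tendsto_arctan_atBot.mono_right nhdsWithin_le_nhds).comp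
      (tendsto_id.atBot_div_const hc)))
    (hlim atTop_le_cocompact ((tendsto_arctan_atTop.mono_right nhdsWithin_le_nhds).comp
      (tendsto_id.atTop_div_const hc)))]
  ring

lemma integral_univ_inv_sq_add_sq_mul_sq_add_sq (ha : 0 < a) (hb : 0 < b) :
    ∫ x : ℝ, ((x ^ 2 + a ^ 2) * (x ^ 2 + b ^ 2))⁻¹ = π / (a * b * (a + b)) := by
  rcases eq_or_ne a b with rfl | hab
  · simp_rw [← sq, integral_univ_inv_sq_add_sq_sq ha]
    field_simp
    ring
  have hsq : b ^ 2 - a ^ 2 ≠ 0 := by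
    rw [sq_sub_sq]
    exact mul_ne_zero (by positivity) (sub_ne_zero.2 hab.symm)
  have hpartial : ∀ x : ℝ, ((x ^ 2 + a ^ 2) * (x ^ 2 + b ^ 2))⁻¹
      = (b ^ 2 - a ^ 2)⁻¹ * ((x ^ 2 + a ^ 2)⁻¹ - (x ^ 2 + b ^ 2)⁻¹) := by
    intro x
    field_simp
    ring
  simp_rw [hpartial]
  rw [integral_const_mul, integral_sub (integrable_inv_sq_add_sq ha.ne')
    (integrable_inv_sq_add_sq hb.ne'), integral_univ_inv_sq_add_sq ha,
    integral_univ_inv_sq_add_sq hb]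
  field_simp
  ring

end RealIntegrals

lemma norm_inv_le_inv_abs_re {w : ℂ} (hw : w.re ≠ 0) : ‖w⁻¹‖ ≤ |w.re|⁻¹ := by
  rw [norm_inv]
  exact inv_anti₀ (abs_pos.2 hw) (Complex.abs_re_le_norm w)

lemma integral_div_sub_I_mul_of_even {f : ℝ → ℂ} (heven : ∀ x, f (-x) = f x) (w : ℂ) :
    ∫ x : ℝ, f x / (w - I * x) = ∫ x : ℝ, f x / (w + I * x) := by
  rw [← integral_neg_eq_self]
  simp [heven, sub_eq_add_neg]

/-- Averaging over `x ↦ -x` replaces `1 / (α + I x)` by its real part. -/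
lemma integral_div_ofReal_add_I_mul_of_even {f : ℝ → ℂ} (hf : Integrable f)
    (heven : ∀ x, f (-x) = f x) {α : ℝ} (hα : α ≠ 0) :
    ∫ x : ℝ, f x / (α + I * x) = ∫ x : ℝ, f x * ↑(α / (x ^ 2 + α ^ 2)) := by
  have hint : Integrable fun x : ℝ ↦ f x / (α + I * x) := by
    simp_rw [div_eq_inv_mul]
    refine hf.bdd_mul (c := |α|⁻¹) (by fun_prop) (ae_of_all _ fun x ↦ ?_)
    simpa using norm_inv_le_inv_abs_re (w := α + I * x) (by simpa using hα)
  have hint' : Integrable fun x : ℝ ↦ f x / (α - I * x) := by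
    simpa [heven, sub_eq_add_neg] using hint.comp_neg
  have hsum (x : ℝ) :
      f x / (α + I * x) + f x / (α - I * x) = 2 * (f x * ↑(α / (x ^ 2 + α ^ 2))) := by
    have h₁ : (α : ℂ) + I * x ≠ 0 := fun h ↦ hα (by simpa using congrArg Complex.re h)
    have h₂ : (α : ℂ) - I * x ≠ 0 := fun h ↦ hα (by simpa using congrArg Complex.re h)
    have h₃ : (x : ℂ) ^ 2 + α ^ 2 ≠ 0 := by exact_mod_cast (by positivity : x ^ 2 + α ^ 2 ≠ 0)
    push_cast
    field_simp
    linear_combination (2 * f x * α * x ^ 2) * Complex.I_sq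
  calc ∫ x : ℝ, f x / (α + I * x)
      = ((∫ x : ℝ, f x / (α + I * x)) + ∫ x : ℝ, f x / (α - I * x)) / 2 := by
        rw [integral_div_sub_I_mul_of_even heven]; ring
    _ = ∫ x : ℝ, f x * ↑(α / (x ^ 2 + α ^ 2)) := by
        rw [← integral_add hint hint']
        simp_rw [hsum, integral_const_mul]
        ring

lemma integral_Ioi_exp_mul_integral_exp_mul {g : ℝ → ℂ} (hg : Integrable g) {z : ℝ}
    (hz : z ≠ 0) :
    ∫ t in Ioi (0 : ℝ), cexp (-(t : ℂ) * z ^ 2) * ∫ x : ℝ, cexp (-(t : ℂ) * x ^ 2) * g x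
      = ∫ x : ℝ, g x / (x ^ 2 + z ^ 2) := by
  set F : ℝ → ℝ → ℂ := fun t x ↦ cexp (-(x ^ 2 + z ^ 2 : ℂ) * t) * g x
  have hF (t : ℝ) : cexp (-(t : ℂ) * z ^ 2) * ∫ x : ℝ, cexp (-(t : ℂ) * x ^ 2) * g x
      = ∫ x : ℝ, F t x := by
    rw [← integral_const_mul]
    congr 1 with x
    rw [← mul_assoc, ← Complex.exp_add]
    congr 2
    ring
  have hslice (x : ℝ) : ∫ t in Ioi (0 : ℝ), F t x = g x / (x ^ 2 + z ^ 2) := by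
    have hre : (-(x ^ 2 + z ^ 2 : ℂ)).re < 0 := by
      norm_cast
      exact neg_neg_of_pos (by positivity)
    rw [integral_mul_const, integral_exp_mul_complex_Ioi hre, Complex.ofReal_zero, mul_zero,
      Complex.exp_zero, neg_div_neg_eq, one_div, inv_mul_eq_div]
  have hint : Integrable (Function.uncurry F) ((volume.restrict (Ioi 0)).prod volume) := by
    have hdom : Integrable (fun p : ℝ × ℝ ↦ rexp (-z ^ 2 * p.1) * ‖g p.2‖)
        ((volume.restrict (Ioi 0)).prod volume) :=
      (exp_neg_integrableOn_Ioi 0 (by positivity : 0 < z ^ 2)).mul_prod hg.norm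
    refine hdom.mono' (((by fun_prop : Continuous fun p : ℝ × ℝ ↦
      cexp (-(p.2 ^ 2 + z ^ 2 : ℂ) * p.1)).aestronglyMeasurable).mul hg.1.comp_snd) ?_
    filter_upwards [Measure.quasiMeasurePreserving_fst.ae (ae_restrict_mem measurableSet_Ioi)]
      with p (hp : 0 < p.1)
    simp only [Function.uncurry, F, norm_mul, Complex.norm_exp]
    gcongr
    norm_cast
    nlinarith [mul_nonneg (sq_nonneg p.2) hp.le]
  simp_rw [hF]
  rw [integral_integral_swap hint]
  simp_rw [hslice]

lemma integral_div_sq_add_sq_div_sq_add_sq {α z : ℝ} (hα : 0 < α) (hz : 0 < z) :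
    ∫ x : ℝ, ((α / (x ^ 2 + α ^ 2) : ℝ) : ℂ) / (x ^ 2 + z ^ 2) = ↑(π / (z * (z + α))) := by
  have hreal : ∫ x : ℝ, α / (x ^ 2 + α ^ 2) / (x ^ 2 + z ^ 2) = π / (z * (z + α)) := by
    simp_rw [div_div, div_eq_mul_inv]
    rw [integral_const_mul, integral_univ_inv_sq_add_sq_mul_sq_add_sq hα hz]
    field_simp
    ring
  rw [← hreal, ← integral_complex_ofReal]
  push_cast
  rfl

/-- Lemma 7.2(2): for positive reals `z` and `α`,
`2z ∫₀^∞ e^(−t z²) ∫ℝ e^(−tλ²)/(α + iλ) dλ dt = 2π/(z + α)`, and the same with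
`α − iλ` in the denominator. -/
theorem laplace_deriv_cauchy_integral (z α : ℝ) (hz : 0 < z) (hα : 0 < α) :
    (2 * z * ∫ t in Ioi (0 : ℝ), Complex.exp (-(t : ℂ) * z ^ 2) *
        ∫ lam : ℝ, Complex.exp (-(t : ℂ) * lam ^ 2) / ((α : ℂ) + Complex.I * lam)
      = 2 * π / ((z : ℂ) + α)) ∧
    (2 * z * ∫ t in Ioi (0 : ℝ), Complex.exp (-(t : ℂ) * z ^ 2) *
        ∫ lam : ℝ, Complex.exp (-(t : ℂ) * lam ^ 2) / ((α : ℂ) - Complex.I * lam)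
      = 2 * π / ((z : ℂ) + α)) := by
  have heven (t : ℝ) (x : ℝ) : cexp (-(t : ℂ) * ↑(-x) ^ 2) = cexp (-(t : ℂ) * x ^ 2) := by simp
  have hflip (t : ℝ) : ∫ lam : ℝ, cexp (-(t : ℂ) * lam ^ 2) / (α - I * lam)
      = ∫ lam : ℝ, cexp (-(t : ℂ) * lam ^ 2) / (α + I * lam) :=
    integral_div_sub_I_mul_of_even (heven t) _
  have hsymm : ∀ t ∈ Ioi (0 : ℝ), ∫ lam : ℝ, cexp (-(t : ℂ) * lam ^ 2) / (α + I * lam)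
      = ∫ lam : ℝ, cexp (-(t : ℂ) * lam ^ 2) * ↑(α / (lam ^ 2 + α ^ 2)) := fun t ht ↦
    integral_div_ofReal_add_I_mul_of_even (integrable_cexp_neg_mul_sq (by simpa using ht))
      (heven t) hα.ne'
  have hlorentz : Integrable fun x : ℝ ↦ ((α / (x ^ 2 + α ^ 2) : ℝ) : ℂ) := by
    simp_rw [div_eq_mul_inv]
    exact ((integrable_inv_sq_add_sq hα.ne').const_mul α).ofReal
  have hplus : 2 * z * ∫ t in Ioi (0 : ℝ), cexp (-(t : ℂ) * z ^ 2) *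
      ∫ lam : ℝ, cexp (-(t : ℂ) * lam ^ 2) / (α + I * lam) = 2 * π / ((z : ℂ) + α) := by
    rw [setIntegral_congr_fun measurableSet_Ioi fun t ht ↦ by rw [hsymm t ht],
      integral_Ioi_exp_mul_integral_exp_mul hlorentz hz.ne',
      integral_div_sq_add_sq_div_sq_add_sq hα hz]
    have hz' : (z : ℂ) ≠ 0 := by exact_mod_cast hz.ne'
    have hzα : (z : ℂ) + α ≠ 0 := by exact_mod_cast (add_pos hz hα).ne'
    push_cast
    field_simp
  exact ⟨hplus, by simpa only [hflip] using hplus⟩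
end
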